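/- A map ε : X×X∖Δ → P(M) is a k-restricted Fitch map if and only if ε satisfies the hierarchy-like condition (HLC), the inequality condition (IC), and the k-edge-label condition (k-ELC). -/

import Mathlib

/-- A finite rooted phylogenetic tree on leaf set `X`, with vertex type `V`.
Vertices are encoded via a parent function; `par root = root`. -/
structure PhyloTree (V X : Type) : Type where
  fin : Finite V
  root : V
  par : V → V
  par_root : par root = root
  reach : ∀ v : V, ∃ n : ℕ, par^[n] v = root
  leaf : X → V
  leaf_inj : Function.Injective leaf
  leaf_isLeaf : ∀ (x : X) (u : V), par u = leaf x → u = leaf x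
  leaf_only : ∀ v : V, (∀ u : V, par u = v → u = v) → ∃ x : X, leaf x = v
  root_deg : (∃ x : X, leaf x = root) ∨ 2 ≤ {u : V | par u = root ∧ u ≠ root}.ncard
  inner_deg : ∀ v : V, v ≠ root → (¬ ∃ x : X, leaf x = v) →
      2 ≤ {u : V | par u = v ∧ u ≠ v}.ncard

namespace PhyloTree

variable {V X : Type}

/-- `T.anc u v` : `u` is an ancestor of `v`, i.e. `u ⪯_T v`. -/
def anc (T : PhyloTree V X) (u v : V) : Prop := ∃ n : ℕ, T.par^[n] v = u

/-- `l` is the last common ancestor of `a` and `b`. -/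
def IsLca (T : PhyloTree V X) (l a b : V) : Prop :=
  T.anc l a ∧ T.anc l b ∧ ∀ u : V, T.anc u a → T.anc u b → T.anc u l

/-- The cluster of `v`: the set of leaves below `v`. -/
def cluster (T : PhyloTree V X) (v : V) : Set X := {x : X | T.anc v (T.leaf x)}

/-- The cluster set `C(T)`. -/
def clusterSet (T : PhyloTree V X) : Set (Set X) := {S : Set X | ∃ v : V, S = T.cluster v}

/-- The edge `(par u, u)` lies on the descending path from `a` down to `b`. -/
def edgeOnDown (T : PhyloTree V X) (a b u : V) : Prop :=
  T.anc a u ∧ u ≠ a ∧ T.anc u b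

/-- The edge `(par u, u)` lies on the unique path between `v` and `w`. -/
def edgeOnPath (T : PhyloTree V X) (v w u : V) : Prop :=
  ∃ l : V, T.IsLca l v w ∧ (T.edgeOnDown l v u ∨ T.edgeOnDown l w u)

/-- `T` displays the rooted triple `ab|c`. -/
def Displays (T : PhyloTree V X) (a b c : X) : Prop :=
  ∃ l3 l2 : V, T.IsLca l2 (T.leaf a) (T.leaf b) ∧
    T.IsLca l3 l2 (T.leaf c) ∧ l3 ≠ l2

end PhyloTree

/-- `(T, lab)` explains `ε` : for distinct leaves `x,y`, `m ∈ ε x y` iff there is an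
`m`-edge on the path from `lca(x,y)` down to `y`. -/
def Explains {V X M : Type} (T : PhyloTree V X) (lab : V → Set M)
    (ε : X → X → Set M) : Prop :=
  ∀ x y : X, x ≠ y → ∀ m : M,
    (m ∈ ε x y ↔ ∃ l : V, T.IsLca l (T.leaf x) (T.leaf y) ∧
      ∃ u : V, T.edgeOnDown l (T.leaf y) u ∧ m ∈ lab u)

/-- `ε` is a Fitch map: it is explained by some edge-labeled phylogenetic tree. -/
def IsFitchMap {X M : Type} (ε : X → X → Set M) : Prop :=
  ∃ (V : Type) (T : PhyloTree V X) (lab : V → Set M), Explains T lab ε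

/-- The complementary neighborhood `N_{¬m}[y]`. -/
def Nbr {X M : Type} (ε : X → X → Set M) (m : M) (y : X) : Set X :=
  {x : X | x ≠ y ∧ m ∉ ε x y} ∪ {y}

/-- The collection `N[ε]` of all complementary neighborhoods. -/
def NbrSet {X M : Type} (ε : X → X → Set M) : Set (Set X) :=
  {N : Set X | ∃ (m : M) (y : X), N = Nbr ε m y}

/-- A set system is hierarchy-like if any two members intersect in `∅` or one of them. -/
def HLike {X : Type} (H : Set (Set X)) : Prop :=
  ∀ P ∈ H, ∀ Q ∈ H, P ∩ Q = P ∨ P ∩ Q = Q ∨ P ∩ Q = ∅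

/-- The inequality condition (IC). -/
def IneqCond {X M : Type} (ε : X → X → Set M) : Prop :=
  ∀ (m : M) (y y' : X), y' ∈ Nbr ε m y → (Nbr ε m y').ncard ≤ (Nbr ε m y).ncard


/-- `ε` is a `k`-restricted Fitch map. -/
def KRestricted {X M : Type} (ε : X → X → Set M) (k : ℕ) : Prop :=
  ∃ (V : Type) (T : PhyloTree V X) (lab : V → Set M),
    Explains T lab ε ∧ ∀ v : V, v ≠ T.root → (lab v).ncard ≤ k

/-- The `k`-edge-label condition (`k`-ELC). -/
def KELC {X M : Type} (ε : X → X → Set M) (k : ℕ) : Prop :=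
  ∀ N ∈ NbrSet ε, N ≠ (Set.univ : Set X) →
    {m : M | ∃ y : X, N = Nbr ε m y}.ncard ≤ k

/-!
If `(T, lab)` explains `ε`, then `N_{¬m}[y]` is the cluster of the lowest ancestor `u` of `y`
whose parent edge carries `m` (or all of `X` if there is none). Clusters of a tree form a
hierarchy, which gives HLC; a leaf `y'` in that cluster lies below `u`, so
`N_{¬m}[y'] ⊆ N_{¬m}[y]`, which gives IC; and a proper cluster determines its vertex, so every
colour realising it lies in `lab u`, which gives `k`-ELC.

Conversely, under HLC the neighbourhoods together with `X` and the singletons form a hierarchy,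
and the Hasse diagram of a hierarchy is a phylogenetic tree whose clusters are its members. Label
a vertex `N` by the colours `m` with `N = N_{¬m}[y]` for some `y`; `k`-ELC bounds these labels.
IC upgrades HLC to `N_{¬m}[y] ⊆ N_{¬m}[y']` whenever `y ∈ N_{¬m}[y']`, which is exactly what makes
this labelled tree explain `ε`.
-/

open Set

theorem HLike.mono {X : Type} {H H' : Set (Set X)} (h : HLike H) (hsub : H' ⊆ H) : HLike H' :=
  fun P hP Q hQ => h P (hsub hP) Q (hsub hQ)

theorem hLike_iff {X : Type} {H : Set (Set X)} :
    HLike H ↔ ∀ P ∈ H, ∀ Q ∈ H, P ⊆ Q ∨ Q ⊆ P ∨ Disjoint P Q := by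
  simp only [HLike, inter_eq_left, inter_eq_right, disjoint_iff_inter_eq_empty]

theorem HLike.insert_univ_union_range_singleton {X : Type} {H : Set (Set X)} (h : HLike H) :
    HLike (insert univ (H ∪ range singleton)) := by
  have hatom : ∀ P ∈ insert univ (range singleton), ∀ Q : Set X,
      P ⊆ Q ∨ Q ⊆ P ∨ Disjoint P Q := by
    rintro P (rfl | ⟨x, rfl⟩) Q
    · exact Or.inr (Or.inl (subset_univ Q))
    · by_cases hx : x ∈ Q
      · exact Or.inl (singleton_subset_iff.2 hx)
      · exact Or.inr (Or.inr (disjoint_singleton_left.2 hx))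
  rw [hLike_iff] at h ⊢
  rintro P (rfl | hP | hP) Q hQ
  · exact hatom _ (Or.inl rfl) Q
  · rcases hQ with rfl | hQ | hQ
    · rw [disjoint_comm, or_left_comm]
      exact hatom _ (Or.inl rfl) P
    · exact h P hP Q hQ
    · rw [disjoint_comm, or_left_comm]
      exact hatom _ (Or.inr hQ) P
  · exact hatom _ (Or.inr hP) Q

namespace PhyloTree

variable {V X : Type} (T : PhyloTree V X)

theorem anc_refl (v : V) : T.anc v v := ⟨0, rfl⟩

theorem anc_par (v : V) : T.anc (T.par v) v := ⟨1, rfl⟩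

theorem anc_root (v : V) : T.anc T.root v := T.reach v

theorem anc_trans {u v w : V} (huv : T.anc u v) (hvw : T.anc v w) : T.anc u w := by
  obtain ⟨n, hn⟩ := huv
  obtain ⟨m, hm⟩ := hvw
  exact ⟨n + m, by rw [Function.iterate_add_apply, hm, hn]⟩

theorem eq_root_of_iterate_eq_self {v : V} {k : ℕ} (hk : 0 < k) (h : T.par^[k] v = v) :
    v = T.root := by
  obtain ⟨d, hd⟩ := T.reach v
  have hkd : d ≤ k * d := Nat.le_mul_of_pos_left d hk
  calc v = T.par^[k * d] v := (Function.IsPeriodicPt.mul_const h d).eq.symm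
    _ = T.par^[k * d - d] (T.par^[d] v) := by
      rw [← Function.iterate_add_apply, Nat.sub_add_cancel hkd]
    _ = T.root := by rw [hd, Function.iterate_fixed T.par_root]

theorem anc_antisymm {u v : V} (huv : T.anc u v) (hvu : T.anc v u) : u = v := by
  obtain ⟨n, hn⟩ := huv
  obtain ⟨m, hm⟩ := hvu
  rcases Nat.eq_zero_or_pos n with rfl | hn0
  · exact hn.symm
  have hv : v = T.root :=
    T.eq_root_of_iterate_eq_self (k := m + n) (by omega)
      (by rw [Function.iterate_add_apply, hn, hm])
  rw [← hn, hv, Function.iterate_fixed T.par_root]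

theorem anc_total {u v w : V} (hu : T.anc u w) (hv : T.anc v w) : T.anc u v ∨ T.anc v u := by
  obtain ⟨n, rfl⟩ := hu
  obtain ⟨m, rfl⟩ := hv
  rcases Nat.le_total n m with h | h
  · obtain ⟨c, rfl⟩ := Nat.exists_eq_add_of_le h
    exact Or.inr ⟨c, by rw [Nat.add_comm, Function.iterate_add_apply]⟩
  · obtain ⟨c, rfl⟩ := Nat.exists_eq_add_of_le h
    exact Or.inl ⟨c, by rw [Nat.add_comm, Function.iterate_add_apply]⟩

theorem anc_par_of_anc {u w : V} (h : T.anc u w) (hne : u ≠ w) : T.anc u (T.par w) := by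
  obtain ⟨_ | n, hn⟩ := h
  · exact absurd hn.symm hne
  · exact ⟨n, hn⟩

theorem exists_child_anc {v u : V} (h : T.anc v u) (hne : v ≠ u) :
    ∃ c, T.par c = v ∧ c ≠ v ∧ T.anc c u := by
  obtain ⟨n, hn⟩ := h
  induction n generalizing u with
  | zero => exact absurd hn.symm hne
  | succ n ih =>
    by_cases hpu : T.par u = v
    · exact ⟨u, hpu, hne.symm, T.anc_refl u⟩
    · obtain ⟨c, hc, hcv, hcu⟩ := ih (Ne.symm hpu) hn
      exact ⟨c, hc, hcv, T.anc_trans hcu (T.anc_par u)⟩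

theorem exists_lowest_anc (P : V → Prop) {v : V} (h : ∃ u, T.anc u v ∧ P u) :
    ∃ u₀, T.anc u₀ v ∧ P u₀ ∧ ∀ u, T.anc u v → P u → T.anc u u₀ := by
  classical
  have hP : ∃ n, P (T.par^[n] v) := by
    obtain ⟨u, ⟨n, rfl⟩, hu⟩ := h
    exact ⟨n, hu⟩
  refine ⟨T.par^[Nat.find hP] v, ⟨_, rfl⟩, Nat.find_spec hP, ?_⟩
  rintro u ⟨j, rfl⟩ hu
  obtain ⟨c, rfl⟩ := Nat.exists_eq_add_of_le (Nat.find_min' hP hu)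
  exact ⟨c, by rw [Nat.add_comm, Function.iterate_add_apply]⟩

theorem exists_isLca (a b : V) : ∃ l, T.IsLca l a b :=
  T.exists_lowest_anc (T.anc · b) ⟨T.root, T.anc_root a, T.anc_root b⟩

theorem exists_isLca_edgeOnDown_iff (a b : V) (P : V → Prop) :
    (∃ l, T.IsLca l a b ∧ ∃ u, T.edgeOnDown l b u ∧ P u) ↔
      ∃ u, T.anc u b ∧ ¬T.anc u a ∧ P u := by
  constructor
  · rintro ⟨l, ⟨-, -, hlca⟩, u, ⟨hlu, hne, hub⟩, hu⟩
    exact ⟨u, hub, fun hua => hne (T.anc_antisymm (hlca u hua hub) hlu), hu⟩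
  · rintro ⟨u, hub, hua, hu⟩
    obtain ⟨l, hl⟩ := T.exists_isLca a b
    refine ⟨l, hl, u, ⟨?_, ?_, hub⟩, hu⟩
    · exact (T.anc_total hl.2.1 hub).resolve_right fun hul => hua (T.anc_trans hul hl.1)
    · rintro rfl
      exact hua hl.1

theorem cluster_mono {u v : V} (h : T.anc u v) : T.cluster v ⊆ T.cluster u :=
  fun _ hx => T.anc_trans h hx

theorem cluster_root : T.cluster T.root = univ :=
  eq_univ_of_forall fun _ => T.anc_root _

theorem cluster_nonempty (v : V) : (T.cluster v).Nonempty := by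
  have := T.fin
  -- a descendant of `v` with fewest descendants has no child, hence is a leaf
  obtain ⟨w, hvw, hmin⟩ := Set.Finite.exists_minimalFor (fun w => {w' | T.anc w w'}.ncard)
    {w | T.anc v w} (toFinite _) ⟨v, T.anc_refl v⟩
  obtain ⟨x, rfl⟩ := T.leaf_only w fun u hu => by
    by_contra hne
    have hwu : T.anc w u := hu ▸ T.anc_par u
    have hlt : {w' | T.anc u w'} ⊂ {w' | T.anc w w'} :=
      ⟨fun _ h => T.anc_trans hwu h, fun h => hne (T.anc_antisymm (h (T.anc_refl w)) hwu)⟩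
    exact (ncard_lt_ncard hlt).not_ge (hmin (T.anc_trans hvw hwu) (ncard_lt_ncard hlt).le)
  exact ⟨x, hvw⟩

theorem eq_of_anc_of_par_eq {c c' v : V} (hc : T.par c = v) (hc' : T.par c' = v) (hcv : c ≠ v)
    (h : T.anc c c') : c = c' := by
  by_contra hne
  have hcc' := T.anc_par_of_anc h hne
  rw [hc'] at hcc'
  exact hcv (T.anc_antisymm hcc' (hc ▸ T.anc_par c))

theorem cluster_ne_of_par_eq {c v : V} (hc : T.par c = v) (hcv : c ≠ v) (hv : v ≠ T.root) :
    T.cluster c ≠ T.cluster v := by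
  have := T.fin
  have hnl : ¬∃ x, T.leaf x = v := by
    rintro ⟨x, rfl⟩
    exact hcv (T.leaf_isLeaf x c hc)
  obtain ⟨c', ⟨hc', hc'v⟩, hcc'⟩ := exists_ne_of_one_lt_ncard (T.inner_deg v hv hnl) c
  intro heq
  obtain ⟨x, hx'⟩ := T.cluster_nonempty c'
  have hx : x ∈ T.cluster c := heq ▸ T.cluster_mono (hc' ▸ T.anc_par c') hx'
  rcases T.anc_total hx hx' with h | h
  · exact hcc' (T.eq_of_anc_of_par_eq hc hc' hcv h).symm
  · exact hcc' (T.eq_of_anc_of_par_eq hc' hc hc'v h)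

theorem eq_of_cluster_eq {u v : V} (h : T.cluster u = T.cluster v) (hv : T.cluster v ≠ univ) :
    u = v := by
  suffices key : ∀ {u v}, T.anc v u → T.cluster u = T.cluster v → T.cluster v ≠ univ → u = v by
    obtain ⟨x, hx⟩ := T.cluster_nonempty u
    rcases T.anc_total hx (h ▸ hx) with huv | hvu
    · exact (key huv h.symm (h ▸ hv)).symm
    · exact key hvu h hv
  intro u v hvu h hv
  by_contra hne
  obtain ⟨c, hc, hcv, hcu⟩ := T.exists_child_anc hvu (Ne.symm hne)
  have hvr : v ≠ T.root := by
    rintro rfl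
    exact hv T.cluster_root
  refine T.cluster_ne_of_par_eq hc hcv hvr (subset_antisymm ?_ ?_)
  · exact T.cluster_mono (hc ▸ T.anc_par c)
  · rw [← h]
    exact T.cluster_mono hcu

theorem hLike_clusterSet : HLike T.clusterSet := by
  rintro _ ⟨u, rfl⟩ _ ⟨u', rfl⟩
  rcases (T.cluster u ∩ T.cluster u').eq_empty_or_nonempty with h | ⟨x, hx, hx'⟩
  · exact Or.inr (Or.inr h)
  rcases T.anc_total hx hx' with h | h
  · exact Or.inr (Or.inl (inter_eq_right.2 (T.cluster_mono h)))
  · exact Or.inl (inter_eq_left.2 (T.cluster_mono h))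

end PhyloTree

section Nbr

variable {X M : Type} {ε : X → X → Set M} {m : M} {x y : X}

theorem mem_nbr_self : y ∈ Nbr ε m y := Or.inr rfl

theorem mem_nbr_iff_of_ne (hxy : x ≠ y) : x ∈ Nbr ε m y ↔ m ∉ ε x y := by
  simp [Nbr, hxy]

end Nbr

namespace Explains

variable {V X M : Type} {T : PhyloTree V X} {lab : V → Set M} {ε : X → X → Set M}

theorem mem_iff (hex : Explains T lab ε) {x y : X} (hxy : x ≠ y) (m : M) :
    m ∈ ε x y ↔ ∃ u, T.anc u (T.leaf y) ∧ x ∉ T.cluster u ∧ m ∈ lab u :=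
  (hex x y hxy m).trans (T.exists_isLca_edgeOnDown_iff _ _ _)

theorem mem_nbr_iff (hex : Explains T lab ε) {m : M} {x y : X} :
    x ∈ Nbr ε m y ↔ ∀ u, T.anc u (T.leaf y) → m ∈ lab u → x ∈ T.cluster u := by
  rcases eq_or_ne x y with rfl | hxy
  · exact iff_of_true mem_nbr_self fun _ hu _ => hu
  rw [mem_nbr_iff_of_ne hxy, hex.mem_iff hxy]
  exact ⟨fun h u hu hm => by_contra fun hx => h ⟨u, hu, hx, hm⟩,
    fun h ⟨u, hu, hx, hm⟩ => hx (h u hu hm)⟩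

theorem nbr_eq_univ_or_cluster (hex : Explains T lab ε) (m : M) (y : X) :
    Nbr ε m y = univ ∨ ∃ u, m ∈ lab u ∧ Nbr ε m y = T.cluster u := by
  by_cases h : ∃ u, T.anc u (T.leaf y) ∧ m ∈ lab u
  · obtain ⟨u₀, hu₀, hm, hlowest⟩ := T.exists_lowest_anc (m ∈ lab ·) h
    refine Or.inr ⟨u₀, hm, ext fun x => hex.mem_nbr_iff.trans ?_⟩
    exact ⟨fun hx => hx u₀ hu₀ hm, fun hx u hu hmu => T.cluster_mono (hlowest u hu hmu) hx⟩
  · simp only [not_exists, not_and] at h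
    exact Or.inl (eq_univ_of_forall fun x => hex.mem_nbr_iff.2 fun u hu hm => absurd hm (h u hu))

theorem nbrSet_subset_clusterSet (hex : Explains T lab ε) : NbrSet ε ⊆ T.clusterSet := by
  rintro _ ⟨m, y, rfl⟩
  rcases hex.nbr_eq_univ_or_cluster m y with h | ⟨u, -, h⟩
  · exact ⟨T.root, h.trans T.cluster_root.symm⟩
  · exact ⟨u, h⟩

theorem hLike (hex : Explains T lab ε) : HLike (NbrSet ε) :=
  T.hLike_clusterSet.mono hex.nbrSet_subset_clusterSet

theorem ineqCond [Finite X] (hex : Explains T lab ε) : IneqCond ε := by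
  intro m y y' hy'
  refine ncard_le_ncard ?_
  rcases hex.nbr_eq_univ_or_cluster m y with h | ⟨u, hm, h⟩
  · exact h ▸ subset_univ _
  · rw [h] at hy' ⊢
    exact fun x hx => hex.mem_nbr_iff.1 hx u hy' hm

theorem kelc [Finite M] (hex : Explains T lab ε) {k : ℕ}
    (hk : ∀ v, v ≠ T.root → (lab v).ncard ≤ k) : KELC ε k := by
  rintro N ⟨m, y, rfl⟩ hN
  obtain ⟨u, -, hu⟩ := (hex.nbr_eq_univ_or_cluster m y).resolve_left hN
  have hur : u ≠ T.root := by
    rintro rfl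
    exact hN (hu.trans T.cluster_root)
  refine (ncard_le_ncard ?_).trans (hk u hur)
  rintro m' ⟨y', hN'⟩
  obtain ⟨u', hm', hu'⟩ := (hex.nbr_eq_univ_or_cluster m' y').resolve_left (hN' ▸ hN)
  rwa [T.eq_of_cluster_eq (hu'.symm.trans (hN'.symm.trans hu)) (by rwa [← hu])] at hm'

end Explains

structure IsHierarchy {X : Type} (H : Set (Set X)) : Prop where
  hLike : HLike H
  univ_mem : univ ∈ H
  singleton_mem : ∀ x, {x} ∈ H
  empty_not_mem : ∅ ∉ H

section HierarchyTree

variable {X : Type} {H : Set (Set X)}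

noncomputable def hierarchyPar (H : Set (Set X)) (v : H) : H := by
  classical
  exact if h : ∃ p : H, v < p ∧ ∀ q : H, v < q → p ≤ q then h.choose else v

theorem hierarchyPar_eq_self_or_lt (v : H) : hierarchyPar H v = v ∨ v < hierarchyPar H v := by
  unfold hierarchyPar
  split_ifs with h
  exacts [Or.inr h.choose_spec.1, Or.inl rfl]

theorem le_hierarchyPar (v : H) : v ≤ hierarchyPar H v :=
  (hierarchyPar_eq_self_or_lt v).elim Eq.ge le_of_lt

theorem hierarchyPar_eq_self (v : H) (h : ∀ q : H, ¬v < q) : hierarchyPar H v = v :=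
  (hierarchyPar_eq_self_or_lt v).resolve_right (h _)

theorem coe_ne_univ_of_lt {u v : H} (h : v < u) : (v : Set X) ≠ univ :=
  ssubset_univ_iff.1 (lt_of_lt_of_le (Subtype.coe_lt_coe.2 h) (subset_univ _))

theorem hierarchyPar_spec {v : H} (h : ∃ p : H, v < p ∧ ∀ q : H, v < q → p ≤ q) :
    v < hierarchyPar H v ∧ ∀ q : H, v < q → hierarchyPar H v ≤ q := by
  unfold hierarchyPar
  rw [dif_pos h]
  exact h.choose_spec

namespace IsHierarchy

theorem nonempty (hH : IsHierarchy H) {P : Set X} (hP : P ∈ H) : P.Nonempty :=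
  nonempty_iff_ne_empty.2 fun h => hH.empty_not_mem (h ▸ hP)

theorem le_total_of_mem (hH : IsHierarchy H) {u v : H} {x : X} (hu : x ∈ (u : Set X))
    (hv : x ∈ (v : Set X)) : u ≤ v ∨ v ≤ u := by
  rcases hLike_iff.1 hH.hLike u u.2 v v.2 with h | h | h
  · exact Or.inl h
  · exact Or.inr h
  · exact absurd hv (disjoint_left.1 h hu)

theorem exists_least_gt [Finite X] (hH : IsHierarchy H) {v : H} (hv : (v : Set X) ≠ univ) :
    ∃ p : H, v < p ∧ ∀ q : H, v < q → p ≤ q := by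
  have hroot : v < ⟨univ, hH.univ_mem⟩ := Subtype.coe_lt_coe.1 (ssubset_univ_iff.2 hv)
  obtain ⟨p, -, hp⟩ := Finite.exists_le_minimal (p := (v < ·)) hroot
  obtain ⟨x, hx⟩ := hH.nonempty v.2
  refine ⟨p, hp.prop, fun q hq => ?_⟩
  rcases hH.le_total_of_mem (hp.prop.le hx) (hq.le hx) with h | h
  · exact h
  · exact (hp.eq_of_le hq h).ge

theorem lt_hierarchyPar [Finite X] (hH : IsHierarchy H) {v : H} (hv : (v : Set X) ≠ univ) :
    v < hierarchyPar H v ∧ ∀ q : H, v < q → hierarchyPar H v ≤ q :=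
  hierarchyPar_spec (hH.exists_least_gt hv)

theorem iterate_hierarchyPar_eq_iff [Finite X] (hH : IsHierarchy H) {u v : H} :
    (∃ n, (hierarchyPar H)^[n] v = u) ↔ v ≤ u := by
  constructor
  · rintro ⟨n, rfl⟩
    exact Function.id_le_iterate_of_id_le (show id ≤ hierarchyPar H from le_hierarchyPar) n v
  · induction v using WellFoundedGT.induction with
    | _ v ih =>
    intro hvu
    rcases hvu.eq_or_lt with rfl | hlt
    · exact ⟨0, rfl⟩
    obtain ⟨hpar, hleast⟩ := hH.lt_hierarchyPar (coe_ne_univ_of_lt hlt)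
    obtain ⟨n, hn⟩ := ih _ hpar (hleast u hlt)
    exact ⟨n + 1, hn⟩

theorem exists_child [Finite X] (hH : IsHierarchy H) {v : H} {x : X} (hx : x ∈ (v : Set X))
    (hv : (v : Set X) ≠ {x}) : ∃ c : H, x ∈ (c : Set X) ∧ hierarchyPar H c = v ∧ c ≠ v := by
  have hxv : (⟨{x}, hH.singleton_mem x⟩ : H) < v :=
    Subtype.coe_lt_coe.1 (ssubset_iff_subset_ne.2 ⟨singleton_subset_iff.2 hx, hv.symm⟩)
  obtain ⟨c, -, hc⟩ := Finite.exists_le_maximal (p := fun c : H => x ∈ (c : Set X) ∧ c < v)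
    (a := ⟨{x}, hH.singleton_mem x⟩) ⟨mem_singleton x, hxv⟩
  obtain ⟨hcpar, hleast⟩ := hH.lt_hierarchyPar (coe_ne_univ_of_lt hc.prop.2)
  refine ⟨c, hc.prop.1, ?_, hc.prop.2.ne⟩
  by_contra hne
  exact hcpar.ne (hc.eq_of_le ⟨hcpar.le hc.prop.1, (hleast v hc.prop.2).lt_of_ne hne⟩ hcpar.le)

theorem two_le_ncard_children [Finite X] (hH : IsHierarchy H) {v : H}
    (hv : ∀ x, (v : Set X) ≠ {x}) : 2 ≤ {c : H | hierarchyPar H c = v ∧ c ≠ v}.ncard := by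
  obtain ⟨x, hx⟩ := hH.nonempty v.2
  obtain ⟨c₁, hxc₁, hc₁, hc₁v⟩ := hH.exists_child hx (hv x)
  have hlt : c₁ < v := (hc₁ ▸ le_hierarchyPar c₁).lt_of_ne hc₁v
  obtain ⟨y, hy, hyc₁⟩ := exists_of_ssubset (Subtype.coe_lt_coe.2 hlt)
  obtain ⟨c₂, hyc₂, hc₂, hc₂v⟩ := hH.exists_child hy (hv y)
  exact (one_lt_ncard (toFinite _)).2 ⟨c₁, ⟨hc₁, hc₁v⟩, c₂, ⟨hc₂, hc₂v⟩, fun h => hyc₁ (h ▸ hyc₂)⟩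

noncomputable def toPhyloTree [Finite X] (hH : IsHierarchy H) : PhyloTree H X where
  fin := inferInstance
  root := ⟨univ, hH.univ_mem⟩
  par := hierarchyPar H
  par_root := hierarchyPar_eq_self _ fun q hq => coe_ne_univ_of_lt hq rfl
  reach _ := (hH.iterate_hierarchyPar_eq_iff).2 (subset_univ _)
  leaf x := ⟨{x}, hH.singleton_mem x⟩
  leaf_inj _ _ h := singleton_injective (congrArg Subtype.val h)
  leaf_isLeaf x u h := by
    rcases hierarchyPar_eq_self_or_lt u with hu | hu
    · exact hu.symm.trans h
    · rw [h] at hu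
      have := ssubset_singleton_iff.1 (Subtype.coe_lt_coe.2 hu)
      exact absurd (hH.nonempty u.2) (this ▸ not_nonempty_empty)
  leaf_only v hleaf := by
    obtain ⟨x, hx⟩ := hH.nonempty v.2
    by_contra hnl
    obtain ⟨c, -, hc, hcv⟩ := hH.exists_child hx fun h => hnl ⟨x, Subtype.ext h.symm⟩
    exact hcv (hleaf c hc)
  root_deg := by
    by_cases h : ∃ x, (univ : Set X) = {x}
    · obtain ⟨x, hx⟩ := h
      exact Or.inl ⟨x, Subtype.ext hx.symm⟩
    · exact Or.inr (hH.two_le_ncard_children fun x hx => h ⟨x, hx⟩)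
  inner_deg v _ hnl := hH.two_le_ncard_children fun x hx => hnl ⟨x, Subtype.ext hx.symm⟩

theorem toPhyloTree_anc_leaf_iff [Finite X] (hH : IsHierarchy H) {u : H} {x : X} :
    hH.toPhyloTree.anc u (hH.toPhyloTree.leaf x) ↔ x ∈ (u : Set X) :=
  hH.iterate_hierarchyPar_eq_iff.trans (Subtype.coe_le_coe.symm.trans singleton_subset_iff)

end IsHierarchy

end HierarchyTree

section Reconstruction

variable {X M : Type} {ε : X → X → Set M}

def nbrHierarchy (ε : X → X → Set M) : Set (Set X) := insert univ (NbrSet ε ∪ range singleton)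

def nbrLabel (ε : X → X → Set M) (S : Set X) : Set M := {m | ∃ y, S = Nbr ε m y}

theorem isHierarchy_nbrHierarchy [Nonempty X] (hH : HLike (NbrSet ε)) :
    IsHierarchy (nbrHierarchy ε) where
  hLike := hH.insert_univ_union_range_singleton
  univ_mem := Or.inl rfl
  singleton_mem x := Or.inr (Or.inr ⟨x, rfl⟩)
  empty_not_mem := by
    rintro (h | ⟨m, y, h⟩ | ⟨x, h⟩)
    · exact empty_ne_univ h
    · exact (h ▸ mem_nbr_self : y ∈ (∅ : Set X))
    · exact singleton_ne_empty x h

theorem nbr_subset_nbr_of_mem [Finite X] (hH : HLike (NbrSet ε)) (hIC : IneqCond ε) {m : M}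
    {y y' : X} (h : y ∈ Nbr ε m y') : Nbr ε m y ⊆ Nbr ε m y' := by
  rcases hLike_iff.1 hH _ ⟨m, y, rfl⟩ _ ⟨m, y', rfl⟩ with hsub | hsub | hdisj
  · exact hsub
  · exact (eq_of_subset_of_ncard_le hsub (hIC m y' y h)).ge
  · exact absurd h (disjoint_left.1 hdisj mem_nbr_self)

theorem explains_nbrHierarchy [Finite X] [Nonempty X] (hH : HLike (NbrSet ε))
    (hIC : IneqCond ε) :
    Explains (isHierarchy_nbrHierarchy hH).toPhyloTree (fun v => nbrLabel ε v) ε := by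
  intro x y hxy m
  simp only [PhyloTree.exists_isLca_edgeOnDown_iff, IsHierarchy.toPhyloTree_anc_leaf_iff]
  constructor
  · intro hm
    exact ⟨⟨Nbr ε m y, Or.inr (Or.inl ⟨m, y, rfl⟩)⟩, mem_nbr_self,
      fun hx => (mem_nbr_iff_of_ne hxy).1 hx hm, y, rfl⟩
  · rintro ⟨u, hyu, hxu, y', hu⟩
    rw [hu] at hyu hxu
    by_contra hm
    exact hxu (nbr_subset_nbr_of_mem hH hIC hyu ((mem_nbr_iff_of_ne hxy).2 hm))

theorem ncard_nbrLabel_le {k : ℕ} (hELC : KELC ε k) {S : Set X} (hS : S ≠ univ) :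
    (nbrLabel ε S).ncard ≤ k := by
  rcases (nbrLabel ε S).eq_empty_or_nonempty with h | ⟨m, y, hy⟩
  · simp [h]
  · exact hELC S ⟨m, y, hy⟩ hS

end Reconstruction

theorem k_restricted_iff_general {X M : Type} [Fintype X] [Fintype M] [Nonempty X]
    (ε : X → X → Set M) (k : ℕ) :
    KRestricted ε k ↔ HLike (NbrSet ε) ∧ IneqCond ε ∧ KELC ε k := by
  constructor
  · rintro ⟨V, T, lab, hex, hk⟩
    exact ⟨hex.hLike, hex.ineqCond, hex.kelc hk⟩
  · rintro ⟨hH, hIC, hELC⟩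
    exact ⟨_, (isHierarchy_nbrHierarchy hH).toPhyloTree, fun v => nbrLabel ε v,
      explains_nbrHierarchy hH hIC, fun v hv => ncard_nbrLabel_le hELC fun h => hv (Subtype.ext h)⟩

/-- `ε` is a `k`-restricted Fitch map iff it satisfies HLC, IC and
`k`-ELC. -/
theorem k_restricted_iff {X M : Type} [Fintype X] [Fintype M] [Nonempty X] [Nonempty M]
    (ε : X → X → Set M) (k : ℕ) :
    KRestricted ε k ↔ HLike (NbrSet ε) ∧ IneqCond ε ∧ KELC ε k :=
  k_restricted_iff_general ε k
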